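/- Let d ≥ 2 and λ_0 ≥ ... ≥ λ_{d-1} > 0 sum to 1 with 1/d < λ_0 and all R_j := d − (d²−2)λ_j > 0. Define γ_j := 1 − (λ_{d-1}/λ_j)(R_j/R_{d-1}) and p₁ := Σ_{j=0}^{d-1} λ_j γ_j. Then p₁ ≤ d³(d−1)/2 · (λ_0 − 1/d). -/

import Mathlib

/-- With γⱼ := 1 − (λ_{d−1}/λⱼ)(Rⱼ/R_{d−1}) and p₁ := Σⱼ λⱼγⱼ, where
Rⱼ = d − (d²−2)λⱼ > 0 and λ₀ > 1/d, one has p₁ ≤ (d³(d−1)/2)(λ₀ − 1/d). -/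
theorem stmt_16 (d : ℕ) (hd : 2 ≤ d) (lam : Fin d → ℝ)
    (hpos : ∀ j, 0 < lam j)
    (hdec : ∀ i j : Fin d, i ≤ j → lam j ≤ lam i)
    (hsum : ∑ j, lam j = 1)
    (hlow : 1 / (d : ℝ) < lam ⟨0, by omega⟩)
    (hR : ∀ j, 0 < (d : ℝ) - ((d : ℝ) ^ 2 - 2) * lam j)
    (γ : Fin d → ℝ)
    (hγ : ∀ j, γ j = 1 - (lam ⟨d - 1, by omega⟩ / lam j)
      * (((d : ℝ) - ((d : ℝ) ^ 2 - 2) * lam j)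
        / ((d : ℝ) - ((d : ℝ) ^ 2 - 2) * lam ⟨d - 1, by omega⟩)))
    (p₁ : ℝ) (hp₁ : p₁ = ∑ j, lam j * γ j) :
    p₁ ≤ (d : ℝ) ^ 3 * ((d : ℝ) - 1) / 2 * (lam ⟨0, by omega⟩ - 1 / d) := by
  have hdpos : (0:ℝ) < d := by positivity
  have hd2 : (2:ℝ) ≤ (d:ℝ) := by exact_mod_cast hd
  set last : Fin d := ⟨d - 1, by omega⟩ with hlastdef
  set z : Fin d := ⟨0, by omega⟩ with hzdef
  set m : ℝ := lam last with hm
  set L : ℝ := lam z with hL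
  set Rm : ℝ := (d : ℝ) - ((d : ℝ) ^ 2 - 2) * m with hRmdef
  have hRm : 0 < Rm := hR last
  have hmpos : 0 < m := hpos last
  -- m ≤ 1/d : d*m ≤ 1
  have hmle : (d:ℝ) * m ≤ 1 := by
    have h1 : ∀ j : Fin d, m ≤ lam j := fun j => hdec j last (by
      simp only [hlastdef, Fin.le_def]; omega)
    calc (d:ℝ) * m = ∑ _j : Fin d, m := by
          simp [Finset.sum_const, Finset.card_univ, mul_comm]
      _ ≤ ∑ j, lam j := Finset.sum_le_sum (fun j _ => h1 j)
      _ = 1 := hsum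
  -- m ≥ 1 - (d-1) L
  have hmge : 1 - ((d:ℝ) - 1) * L ≤ m := by
    have hz : ∀ j : Fin d, lam j ≤ L := fun j => hdec z j (by
      simp only [hzdef, Fin.le_def]; omega)
    have herase : ∑ j ∈ Finset.univ.erase last, lam j + lam last = ∑ j, lam j :=
      Finset.sum_erase_add _ _ (Finset.mem_univ last)
    have hcard : (Finset.univ.erase last).card = d - 1 := by
      rw [Finset.card_erase_of_mem (Finset.mem_univ last)]
      simp
    have hbound : ∑ j ∈ Finset.univ.erase last, lam j ≤ ((d:ℝ) - 1) * L := by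
      calc ∑ j ∈ Finset.univ.erase last, lam j
          ≤ ∑ _j ∈ Finset.univ.erase last, L :=
            Finset.sum_le_sum (fun j _ => hz j)
        _ = ((d:ℝ) - 1) * L := by
            rw [Finset.sum_const, hcard, nsmul_eq_mul]
            congr 1
            push_cast [Nat.cast_sub (by omega : 1 ≤ d)]
            ring
    rw [hsum] at herase
    linarith
  -- sum of R_j is 2
  have hsumR : ∑ j, ((d : ℝ) - ((d : ℝ) ^ 2 - 2) * lam j) = 2 := by
    rw [Finset.sum_sub_distrib, Finset.sum_const, ← Finset.mul_sum, hsum,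
      Finset.card_univ, Fintype.card_fin, nsmul_eq_mul]
    ring
  -- p₁ = 1 - 2 m / Rm
  have hp1' : p₁ = 1 - 2 * (m / Rm) := by
    have hterm : ∀ j : Fin d, lam j * γ j
        = lam j - m / Rm * ((d : ℝ) - ((d : ℝ) ^ 2 - 2) * lam j) := by
      intro j
      rw [hγ j]
      have hlj : lam j ≠ 0 := (hpos j).ne'
      have hRmne : Rm ≠ 0 := hRm.ne'
      field_simp
    rw [hp₁]
    calc ∑ j, lam j * γ j
        = ∑ j, (lam j - m / Rm * ((d : ℝ) - ((d : ℝ) ^ 2 - 2) * lam j)) :=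
          Finset.sum_congr rfl (fun j _ => hterm j)
      _ = (∑ j, lam j) - m / Rm * ∑ j, ((d : ℝ) - ((d : ℝ) ^ 2 - 2) * lam j) := by
          rw [Finset.sum_sub_distrib, Finset.mul_sum]
      _ = 1 - 2 * (m / Rm) := by rw [hsum, hsumR]; ring
  -- now finish
  set A : ℝ := (d:ℝ) - (d:ℝ)^2 * m with hA
  have hAnn : 0 ≤ A := by nlinarith
  have h1 : p₁ = A / Rm := by
    rw [hp1']
    field_simp
    ring
  set K : ℝ := (d : ℝ) ^ 3 * ((d : ℝ) - 1) / 2 * (L - 1 / d) with hK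
  have hLg : 1 / (d:ℝ) < L := hlow
  have hKnn : 0 ≤ K := by
    rw [hK]
    apply mul_nonneg
    · apply div_nonneg _ (by norm_num)
      apply mul_nonneg (by positivity)
      linarith
    · linarith
  have hRm2 : 2 / (d:ℝ) ≤ Rm := by
    rw [div_le_iff₀ hdpos]
    nlinarith
  -- A * d ≤ 2 K
  have hA2 : A * (d:ℝ) ≤ 2 * K := by
    rw [hK, hA]
    have hinv : (d:ℝ) * (1/(d:ℝ)) = 1 := by field_simp
    have hcube : (d:ℝ)^3 * (1 - ((d:ℝ)-1) * L) ≤ (d:ℝ)^3 * m :=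
      mul_le_mul_of_nonneg_left hmge (by positivity)
    nlinarith [hcube, hinv]
  rw [h1, div_le_iff₀ hRm]
  -- show A ≤ K * Rm
  have hKR : K * (2 / (d:ℝ)) ≤ K * Rm := mul_le_mul_of_nonneg_left hRm2 hKnn
  calc A = A * (d:ℝ) * (1/(d:ℝ)) := by field_simp
    _ ≤ 2 * K * (1/(d:ℝ)) := by
        apply mul_le_mul_of_nonneg_right hA2
        positivity
    _ = K * (2/(d:ℝ)) := by ring
    _ ≤ K * Rm := hKR
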